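/- Identify ℝ² with ℂ. Let d_1,…,d_{12} be the points 0, i, 2i, 3i, 3, 3+i, 3+2i, 3+3i, 4+3i, 5+3i, 6+3i, 7+3i, let f_k(x) = (x + d_k)/4 for 1 ≤ k ≤ 12, and let E₃ be the unique nonempty compact subset of ℝ² with E₃ = ⋃_{k=1}^{12} f_k(E₃). Let K ⊆ ℝ be the 1/4-Cantor set (K = (K/4) ∪ ((K+3)/4)), C = {u + v·i : u ∈ K, 0 ≤ v ≤ 1}, and X = (⋃_{k=9}^{12} f_k(C)) ∪ {t + i : 1 ≤ t ≤ 2}. Then X is a continuum (compact and connected), X is not locally connected, and X ⊆ E₃. -/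

import Mathlib

open Complex

/-- The twelve digits `0, i, 2i, 3i, 3, 3+i, 3+2i, 3+3i, 4+3i, 5+3i, 6+3i, 7+3i`. -/
noncomputable def d12 : Fin 12 → ℂ :=
  ![0, I, 2 * I, 3 * I, 3, 3 + I, 3 + 2 * I, 3 + 3 * I,
    4 + 3 * I, 5 + 3 * I, 6 + 3 * I, 7 + 3 * I]

/-- The maps `f_k(x) = (x + d_k)/4`. -/
noncomputable def f12 (k : Fin 12) (x : ℂ) : ℂ := (x + d12 k) / 4

/-!
`C = K × [0, 1]` is covered by its images under `f₁, …, f₈` and the segment `[1, 2] + i` by its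
images under `f₈, …, f₁₁`; since the `f_k` are contractions, every compact set covered by its own
images lies in the attractor `E₃`, hence so does `X`. The teeth `f_k({u} × [0, 1])` of `X` all
hang from the segment, so `X` is connected. Near `f₉(0) = 1 + 3i/4` the set `X` is just
`f₉(C)`, whose real parts form the copy `1 + K/4` of the Cantor set: its points `1 + 3/4ⁿ`
accumulate at `1`, yet `1 + 2/4ⁿ` is missing, so no neighbourhood of `1 + 3i/4` in `X` is
connected.
-/

open Set Filter Topology Metric
open scoped NNReal

/-- The point `z` of `S` farthest from `E` is some `f i w` with `w ∈ S`, so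
`d(z, E) ≤ c · d(w, E) ≤ c · d(z, E)`. -/
theorem subset_of_subset_iUnion_image_of_mapsTo {α ι : Type*} [MetricSpace α]
    {f : ι → α → α} {c : ℝ≥0} (hc : c < 1) (hf : ∀ i, LipschitzWith c (f i))
    {E S : Set α} (hE : IsCompact E) (hEne : E.Nonempty) (hfE : ∀ i, MapsTo (f i) E E)
    (hS : IsCompact S) (hSf : S ⊆ ⋃ i, f i '' S) : S ⊆ E := by
  rcases S.eq_empty_or_nonempty with rfl | hSne
  · exact empty_subset E
  obtain ⟨z, hzS, hmax⟩ :=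
    hS.exists_isMaxOn hSne (continuous_infDist_pt E).continuousOn
  have hz : infDist z E ≤ c * infDist z E := by
    obtain ⟨i, w, hwS, rfl⟩ := mem_iUnion.1 (hSf hzS)
    obtain ⟨e, he, hwe⟩ := hE.exists_infDist_eq_dist hEne w
    calc infDist (f i w) E ≤ dist (f i w) (f i e) := infDist_le_dist_of_mem (hfE i he)
      _ ≤ c * dist w e := (hf i).dist_le_mul w e
      _ = c * infDist w E := by rw [hwe]
      _ ≤ c * infDist (f i w) E := by gcongr; exact hmax hwS
  have hz0 : infDist z E ≤ 0 := by
    nlinarith [infDist_nonneg (x := z) (s := E), show (c : ℝ) < 1 from hc]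
  intro y hy
  exact (hE.isClosed.mem_iff_infDist_zero hEne).2
    (le_antisymm ((hmax hy).trans hz0) infDist_nonneg)

/-- The image under `φ` of a connected neighbourhood of `x` in `X` would be an interval lying in
`T` and containing some `φ z` across a gap of `T`. -/
theorem not_locallyConnectedSpace_of_frequently_gap {α β : Type*} [TopologicalSpace α]
    [ConditionallyCompleteLinearOrder β] [TopologicalSpace β] [OrderTopology β]
    [DenselyOrdered β] {X : Set α} {x : α} (hx : x ∈ X) {φ : α → β} (hφ : Continuous φ)
    {T : Set β} (hT : ∀ᶠ z in 𝓝 x, z ∈ X → φ z ∈ T)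
    (hgap : ∃ᶠ z in 𝓝 x, z ∈ X ∧ ¬ uIcc (φ x) (φ z) ⊆ T) : ¬ LocallyConnectedSpace X := by
  intro hLC
  obtain ⟨V, hV, hVconn, hVT⟩ := locallyConnectedSpace_iff_connected_subsets.1 hLC ⟨x, hx⟩
    _ (continuous_subtype_val.continuousAt.preimage_mem_nhds hT)
  obtain ⟨N, hN, hNV⟩ := (mem_nhds_subtype X ⟨x, hx⟩ V).1 hV
  obtain ⟨z, ⟨hzX, hzgap⟩, hzN⟩ := (hgap.and_eventually hN).exists
  have hW : IsPreconnected ((φ ∘ Subtype.val) '' V) :=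
    hVconn.image _ (hφ.comp continuous_subtype_val).continuousOn
  have hzV : (⟨z, hzX⟩ : X) ∈ V := hNV hzN
  refine hzgap ((isPreconnected_iff_ordConnected.1 hW).uIcc_subset
    (mem_image_of_mem _ (mem_of_mem_nhds hV)) (mem_image_of_mem _ hzV) |>.trans ?_)
  rintro _ ⟨y, hyV, rfl⟩
  exact hVT hyV y.2

namespace QuarterCantor

variable {K : Set ℝ}

theorem mem_iff_of_eq (hK : K = (fun x : ℝ => x / 4) '' K ∪ (fun x : ℝ => (x + 3) / 4) '' K)
    (x : ℝ) : x ∈ K ↔ 4 * x ∈ K ∨ 4 * x - 3 ∈ K := by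
  nth_rw 1 [hK]
  rw [image_eq_preimage_of_inverse (f := fun x : ℝ => x / 4) (g := fun x => 4 * x)
    (fun _ => by ring) (fun _ => by ring),
    image_eq_preimage_of_inverse (f := fun x : ℝ => (x + 3) / 4) (g := fun x => 4 * x - 3)
    (fun _ => by ring) (fun _ => by ring)]
  rfl

theorem div_four_mem (hK : ∀ x, x ∈ K ↔ 4 * x ∈ K ∨ 4 * x - 3 ∈ K) {x : ℝ} (hx : x ∈ K) :
    x / 4 ∈ K :=
  (hK _).2 <| .inl <| by rwa [mul_div_cancel₀ x four_ne_zero]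

theorem add_three_div_four_mem (hK : ∀ x, x ∈ K ↔ 4 * x ∈ K ∨ 4 * x - 3 ∈ K) {x : ℝ}
    (hx : x ∈ K) : (x + 3) / 4 ∈ K :=
  (hK _).2 <| .inr <| by rwa [mul_div_cancel₀ _ four_ne_zero, add_sub_cancel_right]

theorem subset_Icc (hK : ∀ x, x ∈ K ↔ 4 * x ∈ K ∨ 4 * x - 3 ∈ K) (hKne : K.Nonempty)
    (hKc : IsCompact K) : K ⊆ Icc 0 1 := by
  have hsup : sSup K ≤ 1 := by
    rcases (hK _).1 (hKc.sSup_mem hKne) with h | h <;>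
      linarith [le_csSup hKc.bddAbove h]
  have hinf : 0 ≤ sInf K := by
    rcases (hK _).1 (hKc.sInf_mem hKne) with h | h <;>
      linarith [csInf_le hKc.bddBelow h]
  exact fun x hx => ⟨hinf.trans (csInf_le hKc.bddBelow hx), (le_csSup hKc.bddAbove hx).trans hsup⟩

theorem zero_mem (hK : ∀ x, x ∈ K ↔ 4 * x ∈ K ∨ 4 * x - 3 ∈ K) (hKne : K.Nonempty)
    (hKc : IsCompact K) : (0 : ℝ) ∈ K := by
  have hmin := hKc.sInf_mem hKne
  have h₀ : 0 ≤ sInf K := (subset_Icc hK hKne hKc hmin).1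
  have h₁ : sInf K ≤ sInf K / 4 := csInf_le hKc.bddBelow (div_four_mem hK hmin)
  rwa [show sInf K = 0 by linarith] at hmin

theorem three_div_four_pow_succ_mem (hK : ∀ x, x ∈ K ↔ 4 * x ∈ K ∨ 4 * x - 3 ∈ K)
    (h0 : (0 : ℝ) ∈ K) (n : ℕ) : 3 / 4 ^ (n + 1) ∈ K := by
  induction n with
  | zero => simpa using add_three_div_four_mem hK h0
  | succ n ih => simpa [pow_succ, div_div] using div_four_mem hK ih

theorem two_div_four_pow_notMem (hK : ∀ x, x ∈ K ↔ 4 * x ∈ K ∨ 4 * x - 3 ∈ K)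
    (hK01 : K ⊆ Icc 0 1) (n : ℕ) : 2 / 4 ^ n ∉ K := by
  induction n with
  | zero => exact fun h => by norm_num at h; linarith [(hK01 h).2]
  | succ n ih =>
    have h4 : 4 * (2 / 4 ^ (n + 1)) = (2 : ℝ) / 4 ^ n := by
      rw [pow_succ]; field_simp
    have hlt : (2 : ℝ) / 4 ^ n < 3 :=
      (div_le_self two_pos.le (one_le_pow₀ (by norm_num))).trans_lt (by norm_num)
    rw [hK, h4, not_or]
    exact ⟨ih, fun h => by linarith [(hK01 h).1]⟩

theorem frequently_not_Icc_subset (hK : ∀ x, x ∈ K ↔ 4 * x ∈ K ∨ 4 * x - 3 ∈ K)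
    (hKne : K.Nonempty) (hKc : IsCompact K) : ∃ᶠ x in 𝓝 0, x ∈ K ∧ ¬ Icc 0 x ⊆ K := by
  have hlim : Tendsto (fun n : ℕ => (3 : ℝ) / 4 ^ (n + 1)) atTop (𝓝 0) :=
    tendsto_const_nhds.div_atTop
      ((tendsto_pow_atTop_atTop_of_one_lt (by norm_num)).comp (tendsto_add_atTop_nat 1))
  refine hlim.frequently (Frequently.of_forall fun n => ⟨three_div_four_pow_succ_mem hK
    (zero_mem hK hKne hKc) n, fun hsub => two_div_four_pow_notMem hK
    (subset_Icc hK hKne hKc) (n + 1) (hsub ⟨by positivity, ?_⟩)⟩)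
  gcongr; norm_num

end QuarterCantor

theorem IsPreconnected.reProdIm {s t : Set ℝ} (hs : IsPreconnected s) (ht : IsPreconnected t) :
    IsPreconnected (s ×ℂ t) :=
  equivRealProdCLM.toHomeomorph.isPreconnected_preimage.2 (hs.prod ht)

theorem image2_ofReal_add_ofReal_mul_I (s t : Set ℝ) :
    image2 (fun u v : ℝ => (u : ℂ) + (v : ℂ) * I) s t = s ×ℂ t := by
  ext z
  constructor
  · rintro ⟨u, hu, v, hv, rfl⟩
    simpa [mem_reProdIm] using ⟨hu, hv⟩
  · rintro ⟨hre, him⟩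
    exact ⟨z.re, hre, z.im, him, re_add_im z⟩

theorem image_ofReal_add_I (s : Set ℝ) : (fun t : ℝ => (t : ℂ) + I) '' s = s ×ℂ {1} := by
  simpa [image2_singleton_right] using image2_ofReal_add_ofReal_mul_I s {1}

theorem exists_sub_nat_mem_Icc {y : ℝ} (hy : y ∈ Icc (0 : ℝ) 4) :
    ∃ n : ℕ, n ≤ 3 ∧ y - n ∈ Icc (0 : ℝ) 1 := by
  obtain ⟨h0, h4⟩ := hy
  rcases le_total y 1 with h1 | h1
  · exact ⟨0, by norm_num, by push_cast; constructor <;> linarith⟩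
  rcases le_total y 2 with h2 | h2
  · exact ⟨1, by norm_num, by push_cast; constructor <;> linarith⟩
  rcases le_total y 3 with h3 | h3
  · exact ⟨2, by norm_num, by push_cast; constructor <;> linarith⟩
  · exact ⟨3, le_rfl, by push_cast; constructor <;> linarith⟩

theorem f12_re (k : Fin 12) (z : ℂ) : (f12 k z).re = (z.re + (d12 k).re) / 4 := by
  simp [f12, div_ofNat_re]

theorem f12_im (k : Fin 12) (z : ℂ) : (f12 k z).im = (z.im + (d12 k).im) / 4 := by
  simp [f12, div_ofNat_im]

theorem continuous_f12 (k : Fin 12) : Continuous (f12 k) := by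
  unfold f12; fun_prop

theorem lipschitzWith_f12 (k : Fin 12) : LipschitzWith 4⁻¹ (f12 k) :=
  .of_dist_le_mul fun x y => by
    rw [Complex.dist_eq, Complex.dist_eq, f12, f12, ← sub_div, add_sub_add_right_eq_sub,
      norm_div]
    norm_num [div_eq_inv_mul]

theorem mem_image_f12 {k : Fin 12} {S : Set ℂ} {z : ℂ} :
    z ∈ f12 k '' S ↔ 4 * z - d12 k ∈ S := by
  rw [image_eq_preimage_of_inverse (g := fun z => 4 * z - d12 k) (fun _ => by simp only [f12]; ring)
    (fun _ => by simp only [f12]; ring)]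
  rfl

theorem exists_d12_eq {a : ℝ} (ha : a = 0 ∨ a = 3) {n : ℕ} (hn : n ≤ 3) :
    ∃ k, d12 k = a + n * I := by
  rcases ha with rfl | rfl <;> interval_cases n
  exacts [⟨0, by simp [d12]⟩, ⟨1, by simp [d12]⟩, ⟨2, by simp [d12]⟩, ⟨3, by simp [d12]⟩,
    ⟨4, by simp [d12]⟩, ⟨5, by simp [d12]⟩, ⟨6, by simp [d12]⟩, ⟨7, by simp [d12]⟩]

theorem exists_d12_eq_three_add {n : ℕ} (hn : n ≤ 3) : ∃ k, d12 k = (3 + n : ℝ) + 3 * I := by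
  interval_cases n
  all_goals norm_num
  exacts [⟨7, by simp [d12]⟩, ⟨8, by simp [d12]⟩, ⟨9, by simp [d12]⟩, ⟨10, by simp [d12]⟩]

theorem d12_eight : d12 8 = 4 + 3 * I := by
  simp [d12]

theorem d12_eq_of_mem {k : Fin 12} (hk : k ∈ ({8, 9, 10, 11} : Set (Fin 12))) :
    ∃ n : ℕ, 4 ≤ n ∧ n ≤ 7 ∧ d12 k = n + 3 * I := by
  rcases hk with rfl | rfl | rfl | rfl
  exacts [⟨4, le_rfl, by norm_num, by simp [d12]⟩, ⟨5, by norm_num, by norm_num, by simp [d12]⟩,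
    ⟨6, by norm_num, by norm_num, by simp [d12]⟩, ⟨7, by norm_num, le_rfl, by simp [d12]⟩]

/-- The set `X` of the statement, with `C = K ×ℂ [0, 1]`. -/
def combX (K : Set ℝ) : Set ℂ :=
  (⋃ k ∈ ({8, 9, 10, 11} : Set (Fin 12)), f12 k '' (K ×ℂ Icc 0 1)) ∪ Icc 1 2 ×ℂ {1}

section

variable {K : Set ℝ}

theorem reProdIm_Icc_subset_iUnion_f12 (hK : ∀ x, x ∈ K ↔ 4 * x ∈ K ∨ 4 * x - 3 ∈ K) :
    K ×ℂ Icc 0 1 ⊆ ⋃ k, f12 k '' (K ×ℂ Icc 0 1) := by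
  rintro z ⟨hre, him⟩
  obtain ⟨n, hn, hv⟩ :=
    exists_sub_nat_mem_Icc (y := 4 * z.im) ⟨by linarith [him.1], by linarith [him.2]⟩
  obtain ⟨a, ha, hu⟩ : ∃ a : ℝ, (a = 0 ∨ a = 3) ∧ 4 * z.re - a ∈ K := by
    rcases (hK _).1 hre with h | h
    exacts [⟨0, .inl rfl, by rwa [sub_zero]⟩, ⟨3, .inr rfl, h⟩]
  obtain ⟨k, hk⟩ := exists_d12_eq ha hn
  exact mem_iUnion.2 ⟨k, mem_image_f12.2 ⟨by simpa [hk] using hu, by simpa [hk] using hv⟩⟩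

theorem Icc_reProdIm_one_subset_iUnion_f12 :
    Icc 1 2 ×ℂ {1} ⊆ ⋃ k, f12 k '' (Icc 1 2 ×ℂ {1}) := by
  rintro z ⟨⟨hre1, hre2⟩, him : z.im = 1⟩
  obtain ⟨n, hn, hu⟩ := exists_sub_nat_mem_Icc (y := 4 * z.re - 4) ⟨by linarith, by linarith⟩
  obtain ⟨k, hk⟩ := exists_d12_eq_three_add hn
  have hre : 4 * z.re - (3 + n) ∈ Icc (1 : ℝ) 2 := ⟨by linarith [hu.1], by linarith [hu.2]⟩
  exact mem_iUnion.2 ⟨k, mem_image_f12.2 ⟨by simpa [hk] using hre, by norm_num [hk, him]⟩⟩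

theorem combX_subset {E : Set ℂ} (hE : IsCompact E) (hEne : E.Nonempty)
    (hfE : ∀ k, MapsTo (f12 k) E E) (hK : ∀ x, x ∈ K ↔ 4 * x ∈ K ∨ 4 * x - 3 ∈ K)
    (hKc : IsCompact K) : combX K ⊆ E := by
  have hsub : ∀ {S : Set ℂ}, IsCompact S → S ⊆ ⋃ k, f12 k '' S → S ⊆ E :=
    subset_of_subset_iUnion_image_of_mapsTo (by norm_num) lipschitzWith_f12 hE hEne hfE
  refine union_subset (iUnion₂_subset fun k _ => ?_)
    (hsub (isCompact_Icc.reProdIm isCompact_singleton) Icc_reProdIm_one_subset_iUnion_f12)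
  exact image_subset_iff.2 <| (hsub (hKc.reProdIm isCompact_Icc)
    (reProdIm_Icc_subset_iUnion_f12 hK)).trans (hfE k)

theorem isCompact_combX (hKc : IsCompact K) : IsCompact (combX K) :=
  .union ((toFinite _).isCompact_biUnion fun k _ =>
    (hKc.reProdIm isCompact_Icc).image (continuous_f12 k))
    (isCompact_Icc.reProdIm isCompact_singleton)

theorem isConnected_combX (hK01 : K ⊆ Icc 0 1) : IsConnected (combX K) := by
  have hseg : IsPreconnected (Icc (1 : ℝ) 2 ×ℂ {1}) :=
    isPreconnected_Icc.reProdIm isPreconnected_singleton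
  have hsegX : Icc 1 2 ×ℂ {1} ⊆ combX K := subset_union_right
  have h1I : 1 + I ∈ Icc (1 : ℝ) 2 ×ℂ {1} := by simp [mem_reProdIm]
  refine ⟨⟨_, hsegX h1I⟩, isPreconnected_of_forall (1 + I) ?_⟩
  rintro z (hz | hz)
  · obtain ⟨k, hk, w, ⟨hwK, hw01⟩, rfl⟩ := mem_iUnion₂.1 hz
    obtain ⟨n, hn4, hn7, hd⟩ := d12_eq_of_mem hk
    have htooth : f12 k '' ({w.re} ×ℂ Icc 0 1) ⊆ combX K :=
      (image_mono (reProdIm_subset_iff.2 (prod_mono (singleton_subset_iff.2 hwK) subset_rfl))).trans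
        ((subset_biUnion_of_mem (u := fun k => f12 k '' (K ×ℂ Icc 0 1)) hk).trans
          subset_union_left)
    have hjoin : f12 k (w.re + I) ∈ Icc (1 : ℝ) 2 ×ℂ {1} := by
      obtain ⟨hw0, hw1⟩ := hK01 hwK
      have hn4' : (4 : ℝ) ≤ n := by exact_mod_cast hn4
      have hn7' : (n : ℝ) ≤ 7 := by exact_mod_cast hn7
      have hre : (w.re + n) / 4 ∈ Icc (1 : ℝ) 2 := ⟨by linarith, by linarith⟩
      exact ⟨by simpa [f12_re, hd] using hre, by norm_num [f12_im, hd]⟩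
    refine ⟨_, union_subset hsegX htooth, .inl h1I, .inr (mem_image_of_mem _ ⟨rfl, hw01⟩),
      hseg.union _ hjoin (mem_image_of_mem _ ⟨by simp, by simp⟩)
        ((isPreconnected_singleton.reProdIm isPreconnected_Icc).image _
          (continuous_f12 k).continuousOn)⟩
  · exact ⟨_, hsegX, h1I, hz, hseg⟩

theorem not_locallyConnectedSpace_combX (hK : ∀ x, x ∈ K ↔ 4 * x ∈ K ∨ 4 * x - 3 ∈ K)
    (hKne : K.Nonempty) (hKc : IsCompact K) : ¬ LocallyConnectedSpace (combX K) := by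
  have hK01 := QuarterCantor.subset_Icc hK hKne hKc
  have hmem : ∀ x ∈ K, f12 8 x ∈ combX K := fun x hx =>
    .inl (mem_biUnion (by simp) (mem_image_of_mem _ ⟨by simpa using hx, by simp⟩))
  refine not_locallyConnectedSpace_of_frequently_gap
    (hmem 0 (QuarterCantor.zero_mem hK hKne hKc)) continuous_re (T := {x | 4 * x - 4 ∈ K}) ?_ ?_
  · have hz₀ : f12 8 0 ∈ Ioo (7 / 8 : ℝ) (9 / 8) ×ℂ Ioo (5 / 8) (7 / 8) := by
      norm_num [mem_reProdIm, f12_re, f12_im, d12_eight]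
    filter_upwards [(isOpen_Ioo.reProdIm isOpen_Ioo).mem_nhds hz₀]
      with z ⟨⟨hre1, hre2⟩, him1, him2⟩ hz
    rcases hz with hz | ⟨-, hz : z.im = 1⟩
    · obtain ⟨k, hk, hz⟩ := mem_iUnion₂.1 hz
      obtain ⟨n, hn4, -, hd⟩ := d12_eq_of_mem hk
      have hu : 4 * z.re - n ∈ K := by simpa [hd] using (mem_image_f12.1 hz).1
      obtain rfl : n = 4 := by
        have : (n : ℝ) < 5 := by linarith [(hK01 hu).1]
        have : n < 5 := by exact_mod_cast this
        omega
      simpa using hu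
    · linarith
  · have hlim : Tendsto (fun x : ℝ => f12 8 x) (𝓝 0) (𝓝 (f12 8 0)) :=
      ((continuous_f12 8).comp continuous_ofReal).tendsto' 0 _ (by simp)
    refine hlim.frequently ((QuarterCantor.frequently_not_Icc_subset hK hKne hKc).mono ?_)
    rintro x ⟨hx, hgap⟩
    refine ⟨hmem x hx, fun hsub => hgap fun y hy => ?_⟩
    have hy' : (y + 4) / 4 ∈ Icc (1 : ℝ) ((x + 4) / 4) := ⟨by linarith [hy.1], by linarith [hy.2]⟩
    have hy'' : (y + 4) / 4 ∈ uIcc (f12 8 0).re (f12 8 x).re :=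
      Icc_subset_uIcc (by simpa [f12_re, d12_eight] using hy')
    simpa [mul_div_cancel₀] using hsub hy''

end

/-- Let `E₃` be the attractor of the twelve maps `f_k`, `K` the
1/4-Cantor set, `C = {u + v·i : u ∈ K, 0 ≤ v ≤ 1}`, and
`X = (⋃_{k=9}^{12} f_k(C)) ∪ {t + i : 1 ≤ t ≤ 2}` (indices `9,…,12` in 1-based
numbering, i.e. `8,9,10,11` in `Fin 12`). Then `X` is a continuum (compact and
connected), `X` is not locally connected, and `X ⊆ E₃`. -/
theorem X_is_nonlocally_connected_subcontinuum_of_E3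
    (E₃ : Set ℂ) (hne : E₃.Nonempty) (hc : IsCompact E₃)
    (hE : E₃ = ⋃ k : Fin 12, f12 k '' E₃)
    (K : Set ℝ) (hKne : K.Nonempty) (hKc : IsCompact K)
    (hK : K = (fun x : ℝ => x / 4) '' K ∪ (fun x : ℝ => (x + 3) / 4) '' K)
    (C : Set ℂ)
    (hC : C = Set.image2 (fun u v : ℝ => (u : ℂ) + (v : ℂ) * I) K (Set.Icc (0 : ℝ) 1))
    (X : Set ℂ)
    (hX : X = (⋃ k ∈ ({8, 9, 10, 11} : Set (Fin 12)), f12 k '' C)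
        ∪ (fun t : ℝ => (t : ℂ) + I) '' Set.Icc (1 : ℝ) 2) :
    IsCompact X ∧ IsConnected X ∧ ¬ LocallyConnectedSpace X ∧ X ⊆ E₃ := by
  have hK' := QuarterCantor.mem_iff_of_eq hK
  have hfE : ∀ k, MapsTo (f12 k) E₃ E₃ := fun k x hx => by
    rw [hE]
    exact mem_iUnion_of_mem k (mem_image_of_mem _ hx)
  obtain rfl : X = combX K := by
    rw [hX, hC, image2_ofReal_add_ofReal_mul_I, image_ofReal_add_I, combX]
  exact ⟨isCompact_combX hKc, isConnected_combX (QuarterCantor.subset_Icc hK' hKne hKc),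
    not_locallyConnectedSpace_combX hK' hKne hKc, combX_subset hc hne hfE hK' hKc⟩
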